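/- Let f0, f1, f2 be the automatic transformations of the Mealy automaton A₆, with products written so that (f g)(u) = f(g(u)). Then the following equalities of transformations of infinite binary words hold: f0 ∘ f0 is the identity transformation; f2 f1 = f1 f2 = f2² = f2; f1² = f1; and f2 f0 f1 f0 f2 = f1 f0 f1 f0 f2. -/

import Mathlib

/-- The sequence of states visited by a Mealy automaton with transition function `tr`,
started at state `q`, while reading the infinite word `u`. -/
def stateSeq {X Q : Type*} (tr : X → Q → Q) (q : Q) (u : ℕ → X) : ℕ → Q
  | 0 => q
  | k + 1 => tr (u k) (stateSeq tr q u k)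

/-- The automatic transformation of infinite words defined by the Mealy automaton with
transition function `tr` and output function `out` at the state `q`. -/
def autTrans {X Q : Type*} (tr : X → Q → Q) (out : X → Q → X) (q : Q) (u : ℕ → X) : ℕ → X :=
  fun n => out (u n) (stateSeq tr q u n)

/-- The transformation given by a word of states: the product (composition, applied from
right to left) of the corresponding automatic transformations. -/
def wordTrans {X Q : Type*} (tr : X → Q → Q) (out : X → Q → X) (w : List Q) :
    (ℕ → X) → (ℕ → X) :=
  (w.map (autTrans tr out)).foldr (· ∘ ·) id

/-- The growth function of a Mealy automaton: `growth tr out n` is the number of distinct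
transformations of infinite words obtained as compositions of exactly `n` automatic
transformations of the automaton. -/
noncomputable def growth {X Q : Type*} (tr : X → Q → Q) (out : X → Q → X) (n : ℕ) : ℕ :=
  Set.ncard { g : (ℕ → X) → (ℕ → X) | ∃ w : List Q, w.length = n ∧ wordTrans tr out w = g }

/-- The `i`-th finite difference of a function `γ`. -/
def fdiff (γ : ℕ → ℤ) : ℕ → ℕ → ℤ
  | 0, n => γ n
  | i + 1, n => fdiff γ i n - fdiff γ i (n - 1)

/-- Output function of the automaton `A₆`: at `q0` the output negates each letter; at `q1`
it is the identity; at `q2` it sends both letters to `x0`. -/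
def a6Out : Fin 2 → Fin 3 → Fin 2 := fun x q =>
  if q = 0 then (if x = 0 then 1 else 0)
  else if q = 1 then x else 0

/-- Transition function of the automaton `A₆`: both transitions from `q0` stay at `q0`;
from `q1` and `q2` the transition goes to `q1` on reading `x0` and to `q2` on reading
`x1`. -/
def a6Tr : Fin 2 → Fin 3 → Fin 3 := fun x q =>
  if q = 0 then 0 else (if x = 0 then 1 else 2)

/-- The Fibonacci sequence `Φ` with `Φ₀ = Φ₁ = 1` and `Φ_n = Φ_{n−1} + Φ_{n−2}`. -/
def Phi : ℕ → ℕ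
  | 0 => 1
  | 1 => 1
  | n + 2 => Phi (n + 1) + Phi n

/-- The automatic transformations `f0, f1, f2` of the automaton `A₆` at states
`q0, q1, q2`. -/
def a6F (q : Fin 3) : (ℕ → Fin 2) → (ℕ → Fin 2) := autTrans a6Tr a6Out q

/-!
`f0` negates every letter. For `q ≠ 0` the state after reading a letter is `q1` or `q2`
according as the letter is `x0` or `x1`, so `f1` and `f2` replace by `x0` every letter that
follows an `x1`, and differ only at position `0`, where `f2` writes `x0`. Hence `f1` is a
retraction onto the words without two consecutive `x1`, and `f2` is `f1` followed by
overwriting the first letter with `x0`; all relations follow from these two facts.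
-/

def NoConsecutiveOnes (u : ℕ → Fin 2) : Prop :=
  ∀ n, u n = 0 ∨ u (n + 1) = 0

theorem NoConsecutiveOnes.update_zero {u : ℕ → Fin 2} (hu : NoConsecutiveOnes u) :
    NoConsecutiveOnes (Function.update u 0 0) := by
  intro n
  rcases n with _ | n
  · exact Or.inl (Function.update_self ..)
  · simpa [Function.update_of_ne] using hu (n + 1)

theorem stateSeq_a6Tr_zero (u : ℕ → Fin 2) (n : ℕ) : stateSeq a6Tr 0 u n = 0 := by
  induction n with
  | zero => rfl
  | succ n ih => simp [stateSeq, ih, a6Tr]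

theorem stateSeq_a6Tr_succ {q : Fin 3} (hq : q ≠ 0) (u : ℕ → Fin 2) (n : ℕ) :
    stateSeq a6Tr q u (n + 1) = if u n = 0 then 1 else 2 := by
  induction n with
  | zero => simp [stateSeq, a6Tr, hq]
  | succ n ih =>
    have hne : stateSeq a6Tr q u (n + 1) ≠ 0 := by rw [ih]; split <;> decide
    change a6Tr _ (stateSeq a6Tr q u (n + 1)) = _
    simp [a6Tr, hne]

theorem a6F_zero_apply (u : ℕ → Fin 2) (n : ℕ) : a6F 0 u n = if u n = 0 then 1 else 0 := by
  simp [a6F, autTrans, stateSeq_a6Tr_zero, a6Out]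

theorem a6F_one_apply_zero (u : ℕ → Fin 2) : a6F 1 u 0 = u 0 := by
  simp [a6F, autTrans, stateSeq, a6Out]

theorem a6F_two_apply_zero (u : ℕ → Fin 2) : a6F 2 u 0 = 0 := by
  simp [a6F, autTrans, stateSeq, a6Out]

theorem a6F_apply_succ {q : Fin 3} (hq : q ≠ 0) (u : ℕ → Fin 2) (n : ℕ) :
    a6F q u (n + 1) = if u n = 0 then u (n + 1) else 0 := by
  simp only [a6F, autTrans, stateSeq_a6Tr_succ hq]
  split <;> simp [a6Out]

theorem a6F_zero_involutive : Function.Involutive (a6F 0) := by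
  intro u
  funext n
  rcases Fin.exists_fin_two.mp ⟨u n, rfl⟩ with h | h <;> simp [a6F_zero_apply, h]

theorem a6F_two_eq : a6F 2 = (Function.update · 0 0) ∘ a6F 1 := by
  funext u n
  rcases n with _ | n
  · simp [a6F_two_apply_zero]
  · simp [a6F_apply_succ, Function.update_of_ne]

theorem a6F_one_apply_eq_zero {u : ℕ → Fin 2} {n : ℕ} (h : u n = 0) : a6F 1 u n = 0 := by
  rcases n with _ | n
  · rwa [a6F_one_apply_zero]
  · rw [a6F_apply_succ one_ne_zero]
    split <;> simp [h]

theorem noConsecutiveOnes_a6F_one (u : ℕ → Fin 2) : NoConsecutiveOnes (a6F 1 u) := by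
  intro n
  by_cases h : u n = 0
  · exact Or.inl (a6F_one_apply_eq_zero h)
  · exact Or.inr (by rw [a6F_apply_succ one_ne_zero, if_neg h])

theorem a6F_one_of_noConsecutiveOnes {u : ℕ → Fin 2} (hu : NoConsecutiveOnes u) :
    a6F 1 u = u := by
  funext n
  rcases n with _ | n
  · exact a6F_one_apply_zero u
  · rw [a6F_apply_succ one_ne_zero]
    rcases hu n with h | h <;> simp [h]

theorem a6F_one_comp_one : a6F 1 ∘ a6F 1 = a6F 1 :=
  funext fun u => a6F_one_of_noConsecutiveOnes (noConsecutiveOnes_a6F_one u)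

theorem a6F_two_comp_one : a6F 2 ∘ a6F 1 = a6F 2 := by
  rw [a6F_two_eq, Function.comp_assoc, a6F_one_comp_one]

theorem a6F_one_comp_two : a6F 1 ∘ a6F 2 = a6F 2 := by
  rw [a6F_two_eq]
  exact funext fun u => a6F_one_of_noConsecutiveOnes (noConsecutiveOnes_a6F_one u).update_zero

theorem a6F_two_comp_two : a6F 2 ∘ a6F 2 = a6F 2 := by
  nth_rw 1 [a6F_two_eq]
  rw [Function.comp_assoc, a6F_one_comp_two, a6F_two_eq]
  funext u
  exact Function.update_idem ..

theorem a6F_one_eq_two_of_apply_zero {u : ℕ → Fin 2} (hu : u 0 = 0) : a6F 1 u = a6F 2 u := by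
  rw [a6F_two_eq, Function.comp_apply, eq_comm, Function.update_eq_self_iff,
    a6F_one_apply_zero, hu]

/-- The defining relations of the semigroup `S_{A₆}` hold among the automatic
transformations `f0, f1, f2` of `A₆` (products composed from right to left):
`f0² = 1`, `f2 f1 = f1 f2 = f2² = f2`, `f1² = f1` and
`f2 f0 f1 f0 f2 = f1 f0 f1 f0 f2`. -/
theorem relations_a6 :
    a6F 0 ∘ a6F 0 = id ∧
    a6F 2 ∘ a6F 1 = a6F 1 ∘ a6F 2 ∧
    a6F 1 ∘ a6F 2 = a6F 2 ∘ a6F 2 ∧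
    a6F 2 ∘ a6F 2 = a6F 2 ∧
    a6F 1 ∘ a6F 1 = a6F 1 ∧
    a6F 2 ∘ a6F 0 ∘ a6F 1 ∘ a6F 0 ∘ a6F 2 = a6F 1 ∘ a6F 0 ∘ a6F 1 ∘ a6F 0 ∘ a6F 2 := by
  refine ⟨a6F_zero_involutive.comp_self, a6F_two_comp_one.trans a6F_one_comp_two.symm,
    a6F_one_comp_two.trans a6F_two_comp_two.symm, a6F_two_comp_two, a6F_one_comp_one, ?_⟩
  funext u
  refine (a6F_one_eq_two_of_apply_zero ?_).symm
  simp [a6F_zero_apply, a6F_one_apply_zero, a6F_two_apply_zero]
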